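/- arXiv:1209.2279 — 5 statements merged into one kernel-verified Lean document; each statement's English description precedes it below -/
import Mathlib

section
/- Let X be a finite 2-Frobenius group: there exist proper normal subgroups K ≤ L of X such that L is a Frobenius group with kernel K and X/K is a Frobenius group with kernel L/K. Then the commuting graph Γ(X) is disconnected. More precisely, if J is a complement to K in L, then C_X(j) ≤ J for every nonidentity j ∈ J. -/
def commGraph (G : Type*) [Group G] : SimpleGraph {g : G // g ≠ 1} where
  Adj a b := a ≠ b ∧ Commute (a : G) (b : G)
  symm := ⟨fun _ _ h => ⟨Ne.symm h.1, h.2.symm⟩⟩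
  loopless := ⟨fun _ h => h.1 rfl⟩

/-- `X` is a Frobenius group with kernel `N`: `N` is a nontrivial proper normal subgroup
admitting a complement `H` with `H ∩ H^g = 1` for `g ∉ H`. -/
def IsFrobeniusWithKernel {X : Type*} [Group X] (N : Subgroup X) : Prop :=
  N.Normal ∧ N ≠ ⊥ ∧ N ≠ ⊤ ∧
    ∃ H : Subgroup X, N ⊓ H = ⊥ ∧ N ⊔ H = ⊤ ∧
      ∀ g : X, g ∉ H → ∀ x : X, x ∈ H → g * x * g⁻¹ ∈ H → x = 1

/-!
In a finite Frobenius group with kernel `N` and complement `H`, a nontrivial `h ∈ H` centralizes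
no nontrivial element of `N`. Hence `x ↦ x * h * x⁻¹` maps `N` injectively, so onto, the coset
`N * h`; an element of `N * h` commuting with `1 ≠ n ∈ N` would thus make some conjugate of `n`
commute with `h`. So centralizers of nontrivial kernel elements lie in the kernel.

For `1 ≠ j ∈ J`, the image of `j` in `X ⧸ K` is a nontrivial kernel element, so `C_X(j) ≤ L`.
Inside `L`, `C_L(k) ≤ K` for `1 ≠ k ∈ K` shows that `j` centralizes no nontrivial element of `K`;
as conjugation by `j` respects the unique factorisation `L = K * J`, everything in `L` commuting
with `j` lies in `J`. Thus nontrivial elements of `J` are adjacent only to elements of `J`, while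
`K` supplies vertices outside `J`.
-/

section FixedPointFree

variable {Y : Type*} [Group Y]

theorem Subgroup.eq_one_of_commute_of_malnormal {N H : Subgroup Y} (hNH : N ⊓ H = ⊥)
    (hH : ∀ g : Y, g ∉ H → ∀ x : Y, x ∈ H → g * x * g⁻¹ ∈ H → x = 1)
    {h n : Y} (hh : h ∈ H) (hh1 : h ≠ 1) (hn : n ∈ N) (hnh : Commute n h) : n = 1 := by
  by_cases hnH : n ∈ H
  · have hnNH : n ∈ N ⊓ H := ⟨hn, hnH⟩
    rwa [hNH, Subgroup.mem_bot] at hnNH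
  · refine absurd (hH n hnH h hh ?_) hh1
    rwa [hnh.eq, mul_inv_cancel_right]

theorem Subgroup.exists_conj_eq_mul_of_fixedPointFree [Finite Y] {N : Subgroup Y} [hN : N.Normal]
    {h : Y} (hfree : ∀ n ∈ N, Commute n h → n = 1) {a : Y} (ha : a ∈ N) :
    ∃ x ∈ N, x * h * x⁻¹ = a * h := by
  let f : N → N := fun x => ⟨(x : Y) * h * (x : Y)⁻¹ * h⁻¹, by
    simpa only [mul_assoc] using N.mul_mem x.2 (hN.conj_mem _ (N.inv_mem x.2) h)⟩
  have hf : Function.Injective f := by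
    intro x y hxy
    have hconj : (x : Y) * h * (x : Y)⁻¹ = y * h * (y : Y)⁻¹ :=
      mul_right_cancel (congrArg Subtype.val hxy)
    have hcomm : Commute ((y : Y)⁻¹ * x) h := by
      calc (y : Y)⁻¹ * x * h = (y : Y)⁻¹ * ((x : Y) * h * (x : Y)⁻¹) * x := by group
        _ = h * ((y : Y)⁻¹ * x) := by rw [hconj]; group
    exact (Subtype.ext (inv_mul_eq_one.mp (hfree _ (N.mul_mem (N.inv_mem y.2) x.2) hcomm))).symm
  obtain ⟨x, hx⟩ := Finite.surjective_of_injective hf ⟨a, ha⟩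
  have hxa : (x : Y) * h * (x : Y)⁻¹ * h⁻¹ = a := congrArg Subtype.val hx
  exact ⟨x, x.2, by rw [← hxa, inv_mul_cancel_right]⟩

theorem Subgroup.mem_of_commute_of_fixedPointFree [Finite Y] {N H : Subgroup Y} [hN : N.Normal]
    (hNH : N ⊔ H = ⊤) (hfree : ∀ h ∈ H, h ≠ 1 → ∀ n ∈ N, Commute n h → n = 1)
    {n c : Y} (hn : n ∈ N) (hn1 : n ≠ 1) (hcn : Commute c n) : c ∈ N := by
  obtain ⟨a, ha, h, hh, rfl⟩ := mem_sup_of_normal_left.mp (hNH ▸ mem_top c : c ∈ N ⊔ H)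
  by_cases hh1 : h = 1
  · simpa [hh1] using ha
  obtain ⟨x, -, hxa⟩ := exists_conj_eq_mul_of_fixedPointFree (hfree h hh hh1) ha
  have hcomm : Commute (x⁻¹ * n * x) h := by
    have := (Commute.conj_iff x⁻¹).mpr (hxa ▸ hcn)
    rw [show x⁻¹ * (x * h * x⁻¹) * x⁻¹⁻¹ = h by group, inv_inv] at this
    exact this.symm
  have hconj1 : x⁻¹ * n * x ≠ 1 := by
    intro h1
    apply hn1
    calc n = x * (x⁻¹ * n * x) * x⁻¹ := by group
      _ = 1 := by rw [h1]; group
  exact absurd (hfree h hh hh1 _ (by simpa using hN.conj_mem n hn x⁻¹) hcomm) hconj1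

theorem IsFrobeniusWithKernel.mem_of_commute [Finite Y] {N : Subgroup Y}
    (hN : IsFrobeniusWithKernel N) {n c : Y} (hn : n ∈ N) (hn1 : n ≠ 1) (hcn : Commute c n) :
    c ∈ N := by
  obtain ⟨hNn, -, -, H, hinf, hsup, hmal⟩ := hN
  exact Subgroup.mem_of_commute_of_fixedPointFree hsup
    (fun h hh hh1 m hm hmh => Subgroup.eq_one_of_commute_of_malnormal hinf hmal hh hh1 hm hmh)
    hn hn1 hcn

theorem Subgroup.mem_of_commute_of_mem_sup {N J : Subgroup Y} [hN : N.Normal] (hNJ : Disjoint N J)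
    {j c : Y} (hj : j ∈ J) (hfree : ∀ n ∈ N, Commute n j → n = 1) (hc : c ∈ N ⊔ J)
    (hcj : Commute c j) : c ∈ J := by
  obtain ⟨b, hb, j', hj', rfl⟩ := mem_sup_of_normal_left.mp hc
  -- conjugation by `j` fixes `b * j'` and preserves both factors, so it fixes `b`
  have hfix : j * b * j⁻¹ = b := by
    have hdecomp := mul_injective_of_disjoint hNJ
      (a₁ := (⟨j * b * j⁻¹, hN.conj_mem b hb j⟩,
        ⟨j * j' * j⁻¹, J.mul_mem (J.mul_mem hj hj') (J.inv_mem hj)⟩))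
      (a₂ := (⟨b, hb⟩, ⟨j', hj'⟩))
      (calc j * b * j⁻¹ * (j * j' * j⁻¹) = j * (b * j') * j⁻¹ := by group
        _ = b * j' := by rw [← hcj.eq, mul_inv_cancel_right])
    exact congrArg (fun p => (p.1 : Y)) hdecomp
  have hb1 : b = 1 := hfree b hb (mul_inv_eq_iff_eq_mul.mp hfix).symm
  simpa [hb1] using hj'

end FixedPointFree

section TwoFrobenius

variable {X : Type*} [Group X] [Finite X] {K L : Subgroup X}

theorem IsFrobeniusWithKernel.mem_of_commute_of_subgroupOf (hKL : K ≤ L)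
    (hL : IsFrobeniusWithKernel (K.subgroupOf L)) {k c : X} (hk : k ∈ K) (hk1 : k ≠ 1)
    (hcL : c ∈ L) (hck : Commute c k) : c ∈ K :=
  hL.mem_of_commute (n := ⟨k, hKL hk⟩) (c := ⟨c, hcL⟩) hk (by simpa using hk1) (Subtype.ext hck)

theorem IsFrobeniusWithKernel.mem_of_commute_of_map_mk' [K.Normal] (hKL : K ≤ L)
    (hQ : IsFrobeniusWithKernel (L.map (QuotientGroup.mk' K))) {l c : X} (hl : l ∈ L)
    (hlK : l ∉ K) (hcl : Commute c l) : c ∈ L := by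
  have hc := hQ.mem_of_commute (Subgroup.mem_map_of_mem _ hl)
    (by simpa [QuotientGroup.eq_one_iff] using hlK) (hcl.map (QuotientGroup.mk' K))
  rwa [← Subgroup.mem_comap, Subgroup.comap_map_eq_self (by rwa [QuotientGroup.ker_mk'])] at hc

theorem IsFrobeniusWithKernel.centralizer_le_complement [K.Normal]
    (hL : IsFrobeniusWithKernel (K.subgroupOf L))
    (hQ : IsFrobeniusWithKernel (L.map (QuotientGroup.mk' K))) {J : Subgroup X}
    (hJK : Disjoint J K) (hJKL : J ⊔ K = L) {j : X} (hj : j ∈ J) (hj1 : j ≠ 1) :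
    Subgroup.centralizer {j} ≤ J := by
  intro c hc
  have hJL : J ≤ L := hJKL ▸ le_sup_left
  have hKL : K ≤ L := hJKL ▸ le_sup_right
  have hjK : j ∉ K := fun hjK => hj1 (Subgroup.disjoint_def.mp hJK hj hjK)
  have hfree : ∀ k ∈ K, Commute k j → k = 1 := fun k hk hkj => by_contra fun hk1 =>
    hjK (hL.mem_of_commute_of_subgroupOf hKL hk hk1 (hJL hj) hkj.symm)
  have hcj : Commute c j := Subgroup.mem_centralizer_singleton_iff.mp hc
  have hcL : c ∈ K ⊔ J := sup_comm J K ▸ hJKL ▸ hQ.mem_of_commute_of_map_mk' hKL (hJL hj) hjK hcj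
  exact Subgroup.mem_of_commute_of_mem_sup hJK.symm hj hfree hcL hcj

end TwoFrobenius

theorem SimpleGraph.not_preconnected_of_adj_closed {V : Type*} {G : SimpleGraph V} {P : V → Prop}
    (hP : ∀ u v, G.Adj u v → P u → P v) {a b : V} (ha : P a) (hb : ¬ P b) : ¬ G.Preconnected := by
  intro hG
  refine hb ?_
  clear hb
  induction (reachable_iff_reflTransGen a b).mp (hG a b) with
  | refl => exact ha
  | tail _ hadj ih => exact hP _ _ hadj ih

theorem not_preconnected_commGraph {G : Type*} [Group G] {S : Subgroup G}
    (hS : ∀ s ∈ S, s ≠ 1 → Subgroup.centralizer {s} ≤ S) {s g : G} (hs : s ∈ S) (hs1 : s ≠ 1)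
    (hg : g ∉ S) : ¬ (commGraph G).Preconnected :=
  SimpleGraph.not_preconnected_of_adj_closed (P := fun v => (v : G) ∈ S)
    (fun u _ huv hu => hS u hu u.2 (Subgroup.mem_centralizer_singleton_iff.mpr huv.2.symm.eq))
    (a := ⟨s, hs1⟩) (b := ⟨g, fun hg1 => hg (hg1 ▸ S.one_mem)⟩) hs hg

theorem stmt2_general {X : Type*} [Group X] [Finite X] (K L : Subgroup X)
    (hKn : K.Normal)
    (hLfrob : IsFrobeniusWithKernel (K.subgroupOf L))
    (hQfrob : IsFrobeniusWithKernel (L.map (QuotientGroup.mk' K)))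
    (J : Subgroup X) (hJK : J ⊓ K = ⊥) (hJKL : J ⊔ K = L) :
    ¬ (commGraph X).Preconnected ∧
      ∀ j : X, j ∈ J → j ≠ 1 → Subgroup.centralizer {j} ≤ J := by
  have hJK' : Disjoint J K := disjoint_iff.mpr hJK
  have hcent : ∀ j ∈ J, j ≠ 1 → Subgroup.centralizer {j} ≤ J := fun j hj hj1 =>
    hLfrob.centralizer_le_complement hQfrob hJK' hJKL hj hj1
  obtain ⟨j, hj, hj1⟩ := J.bot_or_exists_ne_one.resolve_left fun hJ =>
    hLfrob.2.2.1 (by rw [← hJKL, hJ, bot_sup_eq, Subgroup.subgroupOf_self])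
  obtain ⟨k, hk, hk1⟩ := K.bot_or_exists_ne_one.resolve_left fun hK =>
    hLfrob.2.1 (by rw [hK, Subgroup.bot_subgroupOf])
  have hkJ : k ∉ J := fun hkJ => hk1 (Subgroup.disjoint_def.mp hJK' hkJ hk)
  exact ⟨not_preconnected_commGraph hcent hj hj1 hkJ, hcent⟩

theorem stmt2 {X : Type*} [Group X] [Finite X] (K L : Subgroup X)
    (hKn : K.Normal) (hLn : L.Normal) (hKL : K ≤ L) (hKp : K ≠ ⊤) (hLp : L ≠ ⊤)
    (hLfrob : IsFrobeniusWithKernel (K.subgroupOf L))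
    (hQfrob : IsFrobeniusWithKernel (L.map (QuotientGroup.mk' K)))
    (J : Subgroup X) (hJL : J ≤ L) (hJK : J ⊓ K = ⊥) (hJKL : J ⊔ K = L) :
    ¬ (commGraph X).Preconnected ∧
      ∀ j : X, j ∈ J → j ≠ 1 → Subgroup.centralizer {j} ≤ J :=
  stmt2_general K L hKn hLfrob hQfrob J hJK hJKL
end

section
/- Let J be a proper nontrivial normal subgroup of a finite group X. Then X is a Frobenius group with kernel J if and only if C_X(j) ≤ J for all nonidentity j ∈ J. -/
/-!
If `H` is a malnormal complement of `J`, a prime `p` dividing both `|H|` and `|J|` would give an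
element of order `p` in `H` centralizing a nontrivial element of `J` (a `p`-group acting on `J`
fixes a nontrivial point), which malnormality forbids; so `J` is a Hall subgroup and every
`p`-element for `p ∣ |H|` is conjugate into `H` by Sylow's theorem. Such an element centralizing
some `1 ≠ j ∈ J` is then trivial, so the index of `C_X(j) ∩ J` in `C_X(j)` has no prime divisor.

Conversely, if `C_X(j) ≤ J` for all `1 ≠ j ∈ J`, a Sylow subgroup centralizes a nontrivial
element of `J` whenever `p ∣ |J|`, so again `J` is a Hall subgroup and Schur–Zassenhaus gives a
complement `H`. If `g = a h` with `a ∈ J`, `h ∈ H` conjugates `x ∈ H` into `H`, then `a` commutes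
with `y = h x h⁻¹` because `[a, y] ∈ J ∩ H`, so `y ∈ C_X(a) ≤ J` unless `a = 1`, i.e. `g ∈ H`.
-/

open Subgroup Pointwise

def Subgroup.IsMalnormal {G : Type*} [Group G] (H : Subgroup G) : Prop :=
  ∀ g : G, g ∉ H → ∀ x : G, x ∈ H → g * x * g⁻¹ ∈ H → x = 1

section

variable {G : Type*} [Group G]

theorem Subgroup.IsMalnormal.eq_one_of_commute {H : Subgroup G} (hH : H.IsMalnormal) {g x : G}
    (hg : g ∉ H) (hx : x ∈ H) (hgx : Commute g x) : x = 1 :=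
  hH g hg x hx (by rwa [hgx.eq, mul_inv_cancel_right])

theorem Subgroup.commute_of_conj_mem {N H : Subgroup G} [N.Normal] (hNH : Disjoint N H) {a y : G}
    (ha : a ∈ N) (hy : y ∈ H) (hay : a * y * a⁻¹ ∈ H) : Commute a y := by
  have hN : a * y * a⁻¹ * y⁻¹ ∈ N := by
    simpa only [mul_assoc] using N.mul_mem ha (‹N.Normal›.conj_mem a⁻¹ (N.inv_mem ha) y)
  have h := disjoint_def.mp hNH hN (H.mul_mem hay (H.inv_mem hy))
  rwa [mul_inv_eq_one, mul_inv_eq_iff_eq_mul] at h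

theorem Subgroup.isComplement'_of_sup_eq_top {N H : Subgroup G} [N.Normal] (hNH : Disjoint N H)
    (hsup : N ⊔ H = ⊤) : IsComplement' N H :=
  isComplement'_of_disjoint_and_mul_eq_univ hNH (by rw [← normal_mul, hsup, coe_top])

theorem Subgroup.isMalnormal_of_centralizer_le {N H : Subgroup G} [N.Normal]
    (hNH : IsComplement' N H) (hN : ∀ j ∈ N, j ≠ 1 → centralizer {j} ≤ N) : H.IsMalnormal := by
  intro g hg x hx hgx
  obtain ⟨a, ha, h, hh, rfl⟩ := mem_sup_of_normal_left.mp (hNH.sup_eq_top ▸ mem_top g)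
  have hy : h * x * h⁻¹ ∈ H := H.mul_mem (H.mul_mem hh hx) (H.inv_mem hh)
  have hay : a * (h * x * h⁻¹) * a⁻¹ ∈ H := by simpa only [mul_inv_rev, mul_assoc] using hgx
  obtain rfl | ha1 := eq_or_ne a 1
  · exact absurd (by simpa only [one_mul] using hh) hg
  have hyN := hN a ha ha1 (mem_centralizer_singleton_iff.mpr
    (commute_of_conj_mem hNH.disjoint ha hy hay).symm)
  exact conj_eq_one_iff.mp (disjoint_def.mp hNH.disjoint hyN hy)

variable [Finite G] {p : ℕ} [Fact p.Prime]

theorem Subgroup.exists_ne_one_isPGroup_zpowers {K : Subgroup G} (hK : p ∣ Nat.card K) :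
    ∃ u ∈ K, u ≠ 1 ∧ IsPGroup p (zpowers u) := by
  obtain ⟨u, hu⟩ := exists_prime_orderOf_dvd_card' (G := K) p hK
  rw [← orderOf_coe] at hu
  refine ⟨u, u.2, fun h => ?_, IsPGroup.of_card (by rw [Nat.card_zpowers, hu, pow_one])⟩
  rw [h, orderOf_one] at hu
  exact (Fact.out : p.Prime).ne_one hu.symm

theorem IsPGroup.exists_le_centralizer_of_dvd_card {P : Subgroup G} (hP : IsPGroup p P)
    (N : Subgroup G) [N.Normal] (hN : p ∣ Nat.card N) :
    ∃ z ∈ N, z ≠ 1 ∧ P ≤ centralizer {z} := by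
  let _ : MulAction P N := MulAction.compHom _ ((MulAut.conjNormal (H := N)).comp P.subtype)
  have h1 : (1 : N) ∈ MulAction.fixedPoints P N := fun g => map_one (MulAut.conjNormal (g : G))
  obtain ⟨z, hz, hz1⟩ := hP.exists_fixed_point_of_prime_dvd_card_of_fixed_point N hN h1
  refine ⟨z, z.2, fun h => hz1 (Subtype.ext h.symm), fun g hg => ?_⟩
  have hgz : g * z * g⁻¹ = z := congrArg Subtype.val (hz ⟨g, hg⟩)
  rw [mem_centralizer_singleton_iff]
  rwa [mul_inv_eq_iff_eq_mul] at hgz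

theorem IsPGroup.exists_conj_mem_of_not_dvd_index {P : Subgroup G} (hP : IsPGroup p P)
    {H : Subgroup G} (hH : ¬ p ∣ H.index) : ∃ g : G, ∀ x ∈ P, g * x * g⁻¹ ∈ H := by
  obtain ⟨R⟩ := (Sylow.nonempty : Nonempty (Sylow p H))
  -- a Sylow subgroup of `H` is one of `G`, since `p ∤ [G : H]`
  have hR : ¬ p ∣ ((R : Subgroup H).map H.subtype).index := by
    rw [index_map_subtype, Nat.Prime.dvd_mul Fact.out]
    exact not_or_intro R.not_dvd_index hH
  obtain ⟨Q, hPQ⟩ := hP.exists_le_sylow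
  obtain ⟨g, hg⟩ := MulAction.exists_smul_eq G Q ((R.2.map H.subtype).toSylow hR)
  refine ⟨g, fun x hx => map_subtype_le (R : Subgroup H) ?_⟩
  have hgx : MulAut.conj g • x ∈ MulAut.conj g • (Q : Subgroup G) :=
    smul_mem_pointwise_smul x _ _ (hPQ hx)
  rwa [← Sylow.coe_subgroup_smul, hg, IsPGroup.toSylow_coe] at hgx

variable {N H : Subgroup G} [N.Normal]

theorem Subgroup.coprime_card_index_of_isMalnormal (hNH : IsComplement' N H)
    (hH : H.IsMalnormal) : (Nat.card N).Coprime N.index := by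
  refine Nat.coprime_of_dvd fun q hq hqN hqH => ?_
  have := Fact.mk hq
  rw [hNH.symm.index_eq_card] at hqH
  obtain ⟨h, hhH, hh1, hh⟩ := exists_ne_one_isPGroup_zpowers hqH
  obtain ⟨z, hzN, hz1, hzh⟩ := hh.exists_le_centralizer_of_dvd_card N hqN
  have hzH : z ∉ H := fun hzH => hz1 (disjoint_def.mp hNH.disjoint hzN hzH)
  have hzh : Commute z h := (mem_centralizer_singleton_iff.mp (hzh (mem_zpowers h))).symm
  exact hh1 (hH.eq_one_of_commute hzH hhH hzh)

theorem Subgroup.centralizer_le_of_isMalnormal (hNH : IsComplement' N H) (hH : H.IsMalnormal)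
    {j : G} (hjN : j ∈ N) (hj1 : j ≠ 1) : centralizer {j} ≤ N := by
  by_contra hC
  obtain ⟨p, hp, hpC⟩ := Nat.exists_prime_and_dvd (mt relIndex_eq_one.mp hC)
  have := Fact.mk hp
  have hpH : ¬ p ∣ H.index := by
    rw [hNH.index_eq_card]
    exact fun hpN => Nat.Prime.not_coprime_iff_dvd.mpr
      ⟨p, hp, hpN, hpC.trans (relIndex_dvd_index_of_normal _ _)⟩
      (coprime_card_index_of_isMalnormal hNH hH)
  obtain ⟨u, huC, hu1, hu⟩ := exists_ne_one_isPGroup_zpowers (hpC.trans (relIndex_dvd_card _ _))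
  obtain ⟨g, hg⟩ := hu.exists_conj_mem_of_not_dvd_index hpH
  have hgjH : g * j * g⁻¹ ∉ H := fun h =>
    conj_eq_one_iff.not.mpr hj1 (disjoint_def.mp hNH.disjoint (‹N.Normal›.conj_mem j hjN g) h)
  have hcomm : Commute (g * j * g⁻¹) (g * u * g⁻¹) :=
    (Commute.conj_iff g).mpr (mem_centralizer_singleton_iff.mp huC).symm
  exact hu1 (conj_eq_one_iff.mp (hH.eq_one_of_commute hgjH (hg u (mem_zpowers u)) hcomm))

theorem Subgroup.coprime_card_index_of_centralizer_le
    (hN : ∀ j ∈ N, j ≠ 1 → centralizer {j} ≤ N) : (Nat.card N).Coprime N.index := by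
  refine Nat.coprime_of_dvd fun q hq hqN hqi => ?_
  have := Fact.mk hq
  obtain ⟨P⟩ := (Sylow.nonempty : Nonempty (Sylow q G))
  obtain ⟨z, hzN, hz1, hPz⟩ := P.2.exists_le_centralizer_of_dvd_card N hqN
  exact P.not_dvd_index (hqi.trans (index_dvd_of_le (hPz.trans (hN z hzN hz1))))

end

theorem stmt3_general {X : Type*} [Group X] [Finite X] (J : Subgroup X)
    (hJn : J.Normal) :
    ((∃ H : Subgroup X, J ⊓ H = ⊥ ∧ J ⊔ H = ⊤ ∧
        ∀ g : X, g ∉ H → ∀ x : X, x ∈ H → g * x * g⁻¹ ∈ H → x = 1) ↔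
      ∀ j : X, j ∈ J → j ≠ 1 → Subgroup.centralizer {j} ≤ J) := by
  constructor
  · rintro ⟨H, hinf, hsup, hH⟩ j hjJ hj1
    exact centralizer_le_of_isMalnormal
      (isComplement'_of_sup_eq_top (disjoint_iff.mpr hinf) hsup) hH hjJ hj1
  · intro hJ
    obtain ⟨H, hJH⟩ :=
      exists_right_complement'_of_coprime (coprime_card_index_of_centralizer_le hJ)
    exact ⟨H, disjoint_iff.mp hJH.disjoint, hJH.sup_eq_top,
      isMalnormal_of_centralizer_le hJH hJ⟩

theorem stmt3 {X : Type*} [Group X] [Finite X] (J : Subgroup X)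
    (hJn : J.Normal) (hJbot : J ≠ ⊥) (hJtop : J ≠ ⊤) :
    ((∃ H : Subgroup X, J ⊓ H = ⊥ ∧ J ⊔ H = ⊤ ∧
        ∀ g : X, g ∉ H → ∀ x : X, x ∈ H → g * x * g⁻¹ ∈ H → x = 1) ↔
      ∀ j : X, j ∈ J → j ≠ 1 → Subgroup.centralizer {j} ≤ J) :=
  stmt3_general J hJn
end

section
/- Let G be a finite group with trivial center, let N be a minimal normal subgroup of G, and set F = C_G(N). If a, b are nonidentity elements of G whose distance in the commuting graph Γ(G) is greater than 4 (or they lie in different components), then C_G(a) ∩ F = 1 or C_G(b) ∩ F = 1. -/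
namespace commGraph

variable {G : Type*} [Group G]

lemma exists_walk_length_le_one_of_commute (u v : {g : G // g ≠ 1})
    (h : Commute (u : G) (v : G)) : ∃ w : (commGraph G).Walk u v, w.length ≤ 1 := by
  by_cases huv : u = v
  · subst huv
    exact ⟨.nil, zero_le_one⟩
  · exact ⟨.cons ⟨huv, h⟩ .nil, le_rfl⟩

lemma exists_walk_length_le_two_of_centralizer_inf_ne_bot {S : Set G} (u : {g : G // g ≠ 1})
    {s : G} (hsS : s ∈ S) (hs : s ≠ 1)
    (hu : Subgroup.centralizer {(u : G)} ⊓ Subgroup.centralizer S ≠ ⊥) :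
    ∃ w : (commGraph G).Walk u ⟨s, hs⟩, w.length ≤ 2 := by
  obtain ⟨⟨x, hxu, hxS⟩, hx⟩ := Subgroup.ne_bot_iff_exists_ne_one.mp hu
  have hx1 : x ≠ 1 := fun h => hx (Subtype.ext h)
  have hux : Commute (u : G) x := Subgroup.mem_centralizer_iff.mp hxu u rfl
  have hxs : Commute (x : G) s := (Subgroup.mem_centralizer_iff.mp hxS s hsS).symm
  obtain ⟨w₁, hw₁⟩ := exists_walk_length_le_one_of_commute u ⟨x, hx1⟩ hux
  obtain ⟨w₂, hw₂⟩ := exists_walk_length_le_one_of_commute ⟨x, hx1⟩ ⟨s, hs⟩ hxs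
  exact ⟨w₁.append w₂, by rw [SimpleGraph.Walk.length_append]; omega⟩

lemma exists_walk_length_le_four_of_centralizer_inf_ne_bot {S : Set G} (hS : ∃ s ∈ S, s ≠ 1)
    (u v : {g : G // g ≠ 1})
    (hu : Subgroup.centralizer {(u : G)} ⊓ Subgroup.centralizer S ≠ ⊥)
    (hv : Subgroup.centralizer {(v : G)} ⊓ Subgroup.centralizer S ≠ ⊥) :
    ∃ w : (commGraph G).Walk u v, w.length ≤ 4 := by
  obtain ⟨s, hsS, hs⟩ := hS
  obtain ⟨w₁, hw₁⟩ := exists_walk_length_le_two_of_centralizer_inf_ne_bot u hsS hs hu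
  obtain ⟨w₂, hw₂⟩ := exists_walk_length_le_two_of_centralizer_inf_ne_bot v hsS hs hv
  refine ⟨w₁.append w₂.reverse, ?_⟩
  rw [SimpleGraph.Walk.length_append, SimpleGraph.Walk.length_reverse]
  omega

end commGraph

theorem stmt4_general {G : Type*} [Group G]
    (N : Subgroup G) (hNbot : N ≠ ⊥)
    (a b : G) (ha : a ≠ 1) (hb : b ≠ 1)
    (hdist : ¬ (commGraph G).Reachable ⟨a, ha⟩ ⟨b, hb⟩ ∨
      4 < (commGraph G).dist ⟨a, ha⟩ ⟨b, hb⟩) :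
    Subgroup.centralizer {a} ⊓ Subgroup.centralizer (N : Set G) = ⊥ ∨
      Subgroup.centralizer {b} ⊓ Subgroup.centralizer (N : Set G) = ⊥ := by
  by_contra! h
  obtain ⟨⟨n, hnN⟩, hn⟩ := Subgroup.ne_bot_iff_exists_ne_one.mp hNbot
  obtain ⟨w, hw⟩ := commGraph.exists_walk_length_le_four_of_centralizer_inf_ne_bot
    ⟨n, hnN, fun h => hn (Subtype.ext h)⟩ ⟨a, ha⟩ ⟨b, hb⟩ h.1 h.2
  rcases hdist with hunreach | hfar
  · exact hunreach ⟨w⟩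
  · exact absurd ((SimpleGraph.dist_le w).trans hw) hfar.not_ge

theorem stmt4 {G : Type*} [Group G] [Finite G] (hZ : Subgroup.center G = ⊥)
    (N : Subgroup G) (hNn : N.Normal) (hNbot : N ≠ ⊥)
    (hNmin : ∀ M : Subgroup G, M.Normal → M ≤ N → M ≠ ⊥ → M = N)
    (a b : G) (ha : a ≠ 1) (hb : b ≠ 1)
    (hdist : ¬ (commGraph G).Reachable ⟨a, ha⟩ ⟨b, hb⟩ ∨
      4 < (commGraph G).dist ⟨a, ha⟩ ⟨b, hb⟩) :
    Subgroup.centralizer {a} ⊓ Subgroup.centralizer (N : Set G) = ⊥ ∨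
      Subgroup.centralizer {b} ⊓ Subgroup.centralizer (N : Set G) = ⊥ :=
  stmt4_general N hNbot a b ha hb hdist
end

section
/- Let G be a finite group, F a nilpotent normal subgroup with trivial centralizer intersection properties, and x_r an element of prime order r such that ⟨x_r⟩F is normal in G and C_G(x_r) ∩ F = 1. Then G = N_G(⟨x_r⟩)F, N_G(⟨x_r⟩) ∩ F = 1, and G/(C_G(x_r)F) is cyclic of order dividing r − 1. -/
/-! Conjugation by the `r`-group `⟨x_r⟩` permutes `F` with fixed points `C_F(x_r) = 1`, so
`|F| ≡ 1 [MOD r]`. Hence `⟨x_r⟩` is a Sylow `r`-subgroup of the normal subgroup `⟨x_r⟩F`, and the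
Frattini argument gives `G = N_G(⟨x_r⟩)F`. An element of `N_G(⟨x_r⟩)` whose commutator with `x_r`
lies in `F` commutes with `x_r`, since that commutator also lies in `⟨x_r⟩` and `⟨x_r⟩ ∩ F = 1`.
This gives `N_G(⟨x_r⟩) ∩ F ≤ C_F(x_r) = 1`, and it identifies `C_G(x_r)F` with the kernel of the
conjugation action of `G` on the subgroup `⟨x_r⟩F/F` of order `r`; so `G/(C_G(x_r)F)` embeds in
its automorphism group, which is cyclic of order `r - 1`. -/

open Subgroup
open scoped commutatorElement

section

variable {G : Type*} [Group G]

theorem Subgroup.card_map_of_inf_ker_eq_bot {G' : Type*} [Group G'] (f : G →* G')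
    {H : Subgroup G} (hH : H ⊓ f.ker = ⊥) : Nat.card (H.map f) = Nat.card H := by
  have hinj : Function.Injective (f.domRestrict H) := by
    rw [← MonoidHom.ker_eq_bot_iff, MonoidHom.ker_domRestrict, subgroupOf_eq_bot, disjoint_iff,
      inf_comm, hH]
  rw [← MonoidHom.domRestrict_range]
  exact Nat.card_congr (MonoidHom.ofInjective hinj).symm.toEquiv

theorem Subgroup.relIndex_sup_eq_relIndex_inf [Finite G] (H F : Subgroup G) [F.Normal] :
    H.relIndex (H ⊔ F) = (H ⊓ F).relIndex F := by
  have h := relIndex_mul_relIndex (H ⊓ F) H (H ⊔ F) inf_le_left le_sup_left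
  rw [← relIndex_mul_relIndex (H ⊓ F) F (H ⊔ F) inf_le_right le_sup_right,
    relIndex_sup_right, inf_relIndex_left, mul_comm ((H ⊓ F).relIndex F)] at h
  exact Nat.eq_of_mul_eq_mul_left (Nat.pos_of_ne_zero index_ne_zero_of_finite) h

theorem IsPGroup.card_modEq_card_centralizer_inf [Finite G] {p : ℕ} [Fact p.Prime]
    {P : Subgroup G} (hP : IsPGroup p P) (F : Subgroup G) [F.Normal] :
    Nat.card F ≡ Nat.card (centralizer (P : Set G) ⊓ F : Subgroup G) [MOD p] := by
  let _ : MulAction P F := MulAction.compHom F ((MulAut.conjNormal (H := F)).comp P.subtype)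
  have hfix : MulAction.fixedPoints P F = ((centralizer (P : Set G)).subgroupOf F : Set F) := by
    ext f
    simp only [MulAction.mem_fixedPoints, MulAction.compHom_smul_def, SetLike.mem_coe,
      mem_subgroupOf, mem_centralizer_iff, Subtype.forall, Subtype.ext_iff,
      MonoidHom.comp_apply, coe_subtype, MulAut.smul_def, MulAut.conjNormal_apply]
    exact forall₂_congr fun a _ ↦ mul_inv_eq_iff_eq_mul
  calc Nat.card F ≡ Nat.card (MulAction.fixedPoints P F) [MOD p] :=
        hP.card_modEq_card_fixedPoints F
    _ = Nat.card ((centralizer (P : Set G)).subgroupOf F) := by rw [hfix]; rfl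
    _ = Nat.card (centralizer (P : Set G) ⊓ F : Subgroup G) := by
      rw [← inf_subgroupOf_right]
      exact Nat.card_congr (subgroupOfEquivOfLe inf_le_right).toEquiv

theorem Subgroup.normalizer_sup_eq_top_of_isPGroup [Finite G] {p : ℕ} [Fact p.Prime]
    {P F : Subgroup G} [F.Normal] (hP : IsPGroup p P) (hF : ¬ p ∣ Nat.card F)
    [(P ⊔ F).Normal] : normalizer (P : Set G) ⊔ F = ⊤ := by
  have hindex : ¬ p ∣ P.relIndex (P ⊔ F) := fun h ↦
    hF (h.trans (P.relIndex_sup_eq_relIndex_inf F ▸ relIndex_dvd_card _ _))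
  have hfrattini :
      normalizer ((P.subgroupOf (P ⊔ F)).map (P ⊔ F).subtype : Set G) ⊔ (P ⊔ F) = ⊤ :=
    Sylow.normalizer_sup_eq_top (hP.comap_subtype.toSylow hindex)
  rwa [subgroupOf_map_subtype, inf_of_le_left le_sup_left, ← sup_assoc,
    sup_of_le_left le_normalizer] at hfrattini

theorem Subgroup.commute_of_commutatorElement_mem {H F : Subgroup G} (hHF : H ⊓ F = ⊥)
    {n h : G} (hn : n ∈ normalizer (H : Set G)) (hh : h ∈ H) (hnh : ⁅n, h⁆ ∈ F) :
    Commute n h := by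
  have hnhH : ⁅n, h⁆ ∈ H := by
    rw [commutatorElement_def]
    exact mul_mem ((mem_normalizer_iff.mp hn h).mp hh) (inv_mem hh)
  have hnh1 : ⁅n, h⁆ ∈ H ⊓ F := ⟨hnhH, hnh⟩
  rwa [hHF, mem_bot, commutatorElement_eq_one_iff_commute] at hnh1

theorem Subgroup.normalizer_inf_le_centralizer {H F : Subgroup G} [hF : F.Normal]
    (hHF : H ⊓ F = ⊥) : normalizer (H : Set G) ⊓ F ≤ centralizer (H : Set G) := by
  rintro n ⟨hn, hnF⟩
  refine mem_centralizer_iff.mpr fun h hh ↦ (commute_of_commutatorElement_mem hHF hn hh ?_).eq.symm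
  rw [commutatorElement_def, mul_assoc, mul_assoc]
  exact mul_mem hnF (by simpa only [mul_assoc] using hF.conj_mem _ (inv_mem hnF) h)

theorem Subgroup.comap_mk'_centralizer_map_mk' {H F : Subgroup G} [F.Normal]
    (htop : normalizer (H : Set G) ⊔ F = ⊤) (hHF : H ⊓ F = ⊥) :
    (centralizer (H.map (QuotientGroup.mk' F) : Set (G ⧸ F))).comap (QuotientGroup.mk' F) =
      centralizer (H : Set G) ⊔ F := by
  refine le_antisymm (fun g hg ↦ ?_) (sup_le ?_ ?_)
  · obtain ⟨n, hn, f, hf, rfl⟩ := mem_sup_of_normal_right.mp (htop ▸ mem_top g)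
    refine mul_mem_sup (mem_centralizer_iff.mpr fun h hh ↦ ?_) hf
    refine (commute_of_commutatorElement_mem hHF hn hh ?_).eq.symm
    rw [← QuotientGroup.ker_mk' F, MonoidHom.mem_ker, map_commutatorElement,
      commutatorElement_eq_one_iff_commute]
    have hf1 : QuotientGroup.mk' F f = 1 := by rwa [← MonoidHom.mem_ker, QuotientGroup.ker_mk']
    have hcomm := mem_centralizer_iff.mp (mem_comap.mp hg) _ (mem_map_of_mem _ hh)
    rw [map_mul, hf1, mul_one] at hcomm
    exact hcomm.symm
  · intro g hg
    simp only [mem_comap, mem_centralizer_iff]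
    rintro _ ⟨h, hh, rfl⟩
    rw [← map_mul, ← map_mul, mem_centralizer_iff.mp hg h hh]
  · exact (QuotientGroup.ker_mk' F).symm.le.trans (ker_le_comap _ _)

theorem MulAut.ker_conjNormal (H : Subgroup G) [H.Normal] :
    (MulAut.conjNormal : G →* MulAut H).ker = centralizer H := by
  ext g
  simp only [MonoidHom.mem_ker, mem_centralizer_iff, MulEquiv.ext_iff, Subtype.ext_iff,
    MulAut.conjNormal_apply, MulAut.one_apply, Subtype.forall]
  exact forall₂_congr fun a _ ↦ by rw [mul_inv_eq_iff_eq_mul, eq_comm]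

theorem MonoidHom.exists_normal_isCyclic_quotient_card_dvd {A : Type*} [Group A] [IsCyclic A]
    (φ : G →* A) {N : Subgroup G} (hN : φ.ker = N) :
    ∃ hn : N.Normal, (letI := hn; IsCyclic (G ⧸ N) ∧ Nat.card (G ⧸ N) ∣ Nat.card A) := by
  subst hN
  let e := QuotientGroup.quotientKerEquivRange φ
  exact ⟨φ.normal_ker, isCyclic_of_surjective e.symm e.symm.surjective,
    Nat.card_congr e.toEquiv ▸ φ.range.card_subgroup_dvd_card⟩

theorem isCyclic_mulAut_of_card_prime {Z : Type*} [Group Z] {p : ℕ} (hp : p.Prime)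
    (hZ : Nat.card Z = p) : IsCyclic (MulAut Z) := by
  have := Fact.mk hp
  have := isCyclic_of_prime_card hZ
  have : IsCyclic (ZMod (Nat.card Z))ˣ := hZ ▸ ZMod.isCyclic_units_prime hp
  exact isCyclic_of_surjective (IsCyclic.mulAutMulEquiv Z).symm (MulEquiv.surjective _)

theorem card_mulAut_of_card_prime {Z : Type*} [Group Z] {p : ℕ} (hp : p.Prime)
    (hZ : Nat.card Z = p) : Nat.card (MulAut Z) = p - 1 := by
  have := Fact.mk hp
  have := isCyclic_of_prime_card hZ
  have : Finite Z := Nat.finite_of_card_ne_zero (hZ ▸ hp.ne_zero)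
  rw [IsCyclic.card_mulAut, hZ, Nat.totient_prime hp]

end

theorem stmt12_general {G : Type*} [Group G] [Finite G]
    (F : Subgroup G) (hFn : F.Normal)
    (r : ℕ) (hr : r.Prime) (x_r : G) (hord : orderOf x_r = r)
    (hnorm : ((Subgroup.zpowers x_r) ⊔ F).Normal)
    (hint : Subgroup.centralizer {x_r} ⊓ F = ⊥) :
    (∀ g : G, ∃ n f : G, n ∈ Subgroup.normalizer (Subgroup.zpowers x_r : Set G) ∧ f ∈ F ∧ g = n * f) ∧
    Subgroup.normalizer (Subgroup.zpowers x_r : Set G) ⊓ F = ⊥ ∧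
    ∃ hn : (Subgroup.centralizer {x_r} ⊔ F).Normal,
      (letI := hn;
        IsCyclic (G ⧸ (Subgroup.centralizer {x_r} ⊔ F)) ∧
        Nat.card (G ⧸ (Subgroup.centralizer {x_r} ⊔ F)) ∣ r - 1) := by
  have := Fact.mk hr
  have hcard : Nat.card (zpowers x_r) = r := by rw [Nat.card_zpowers, hord]
  have hpgroup : IsPGroup r (zpowers x_r) := IsPGroup.of_card (n := 1) (by rw [hcard, pow_one])
  have hcentr : centralizer (zpowers x_r : Set G) = centralizer {x_r} := by
    rw [zpowers_eq_closure, centralizer_closure]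
  have hrF : ¬ r ∣ Nat.card F := fun hdvd ↦ by
    have hmod := hpgroup.card_modEq_card_centralizer_inf F
    rw [hcentr, hint, card_bot] at hmod
    exact hr.not_dvd_one
      (Nat.modEq_zero_iff_dvd.mp (hmod.symm.trans (Nat.modEq_zero_iff_dvd.mpr hdvd)))
  have hdisj : zpowers x_r ⊓ F = ⊥ :=
    disjoint_iff.mp (disjoint_of_coprime_natCard (hcard ▸ hr.coprime_iff_not_dvd.mpr hrF))
  have htop := normalizer_sup_eq_top_of_isPGroup hpgroup hrF
  refine ⟨fun g ↦ ?_, le_bot_iff.mp ?_, ?_⟩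
  · obtain ⟨n, hn, f, hf, rfl⟩ := mem_sup_of_normal_right.mp (htop ▸ mem_top g)
    exact ⟨n, f, hn, hf, rfl⟩
  · rw [← hint, ← hcentr]
    exact le_inf (normalizer_inf_le_centralizer hdisj) inf_le_right
  · let Z := (zpowers x_r).map (QuotientGroup.mk' F)
    have : Z.Normal := by
      simpa only [Subgroup.map_sup, QuotientGroup.map_mk'_self, sup_bot_eq] using
        hnorm.map _ (QuotientGroup.mk'_surjective F)
    have hZ : Nat.card Z = r := by
      rw [card_map_of_inf_ker_eq_bot _ (by rwa [QuotientGroup.ker_mk']), hcard]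
    have := isCyclic_mulAut_of_card_prime hr hZ
    have hker : ((MulAut.conjNormal (H := Z)).comp (QuotientGroup.mk' F)).ker =
        centralizer {x_r} ⊔ F := by
      rw [← MonoidHom.comap_ker, MulAut.ker_conjNormal, comap_mk'_centralizer_map_mk' htop hdisj,
        hcentr]
    simpa only [card_mulAut_of_card_prime hr hZ] using
      MonoidHom.exists_normal_isCyclic_quotient_card_dvd _ hker

theorem stmt12 {G : Type*} [Group G] [Finite G]
    (F : Subgroup G) (hFn : F.Normal) (hFnil : Group.IsNilpotent F)
    (r : ℕ) (hr : r.Prime) (x_r : G) (hord : orderOf x_r = r)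
    (hnorm : ((Subgroup.zpowers x_r) ⊔ F).Normal)
    (hint : Subgroup.centralizer {x_r} ⊓ F = ⊥) :
    (∀ g : G, ∃ n f : G, n ∈ Subgroup.normalizer (Subgroup.zpowers x_r : Set G) ∧ f ∈ F ∧ g = n * f) ∧
    Subgroup.normalizer (Subgroup.zpowers x_r : Set G) ⊓ F = ⊥ ∧
    ∃ hn : (Subgroup.centralizer {x_r} ⊔ F).Normal,
      (letI := hn;
        IsCyclic (G ⧸ (Subgroup.centralizer {x_r} ⊔ F)) ∧
        Nat.card (G ⧸ (Subgroup.centralizer {x_r} ⊔ F)) ∣ r - 1) :=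
  stmt12_general F hFn r hr x_r hord hnorm hint
end

section
/- Let 𝔽 be a field of odd characteristic and F the group of matrices [[1,0,0,0],[a,1,0,0],[b,x,1,0],[c,d,−a,1]] with xa = d−b over 𝔽. Let A = {[[1,0,0,0],[a,1,0,0],[0,0,1,0],[0,0,−a,1]] : a ∈ 𝔽} and g = [[1,0,0,0],[0,1,0,0],[1,1,1,0],[0,1,0,1]]. Then no nonidentity element of A commutes with any nonidentity element of g⁻¹Ag = {[[1,0,0,0],[a,1,0,0],[−a,0,1,0],[0,−a,−a,1]] : a ∈ 𝔽}. -/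
theorem stmt19 (𝔽 : Type*) [Field 𝔽] (hchar : Odd (ringChar 𝔽)) (hp : (ringChar 𝔽).Prime)
    (a b : 𝔽) (ha : a ≠ 0) (hb : b ≠ 0) :
    (!![1, 0, 0, 0; a, 1, 0, 0; 0, 0, 1, 0; 0, 0, -a, 1] : Matrix (Fin 4) (Fin 4) 𝔽) *
        !![1, 0, 0, 0; b, 1, 0, 0; -b, 0, 1, 0; 0, -b, -b, 1] ≠
      !![1, 0, 0, 0; b, 1, 0, 0; -b, 0, 1, 0; 0, -b, -b, 1] *
        !![1, 0, 0, 0; a, 1, 0, 0; 0, 0, 1, 0; 0, 0, -a, 1] := by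
  intro h
  have h30 := congrFun (congrFun h 3) 0
  simp [Matrix.mul_apply, Fin.sum_univ_four, Matrix.vecHead, Matrix.vecTail] at h30
  -- h30 : a * b = -(b * a) (roughly)
  have h2 : (2 : 𝔽) ≠ 0 := by
    have : ringChar 𝔽 ≠ 2 := by
      rintro h2
      rw [h2] at hchar
      exact (Nat.not_even_iff_odd.mpr hchar) even_two
    exact Ring.two_ne_zero (by simpa [ringChar.eq_iff] using this)
  have : 2 * (a * b) = 0 := by ring_nf; ring_nf at h30; linear_combination h30
  exact ha (by
    rcases mul_eq_zero.mp this with h' | h'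
    · exact absurd h' h2
    · rcases mul_eq_zero.mp h' with h'' | h''
      · exact h''
      · exact absurd h'' hb)
end
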